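/- arXiv:2404.12136 — 6 statements merged into one kernel-verified Lean document; each statement's English description precedes it below -/
import Mathlib

section
/- 10 · arccos(√5/3) + 5 · arccos((3 − 5√5/3)/(5 − √5)) > 4π. -/
open Real

lemma arccos_anti {x y : ℝ} (h : x ≤ y) : Real.arccos y ≤ Real.arccos x := by
  have := Real.monotone_arcsin h
  simp only [Real.arccos]
  linarith

theorem pentagonal_prism_net_length_gt :
    10 * Real.arccos (Real.sqrt 5 / 3)
      + 5 * Real.arccos ((3 - 5 * Real.sqrt 5 / 3) / (5 - Real.sqrt 5)) > 4 * π := by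
  have h5 : Real.sqrt 5 ^ 2 = 5 := Real.sq_sqrt (by norm_num)
  have h3 : Real.sqrt 3 ^ 2 = 3 := Real.sq_sqrt (by norm_num)
  have h5pos : 0 < Real.sqrt 5 := Real.sqrt_pos.2 (by norm_num)
  have h3pos : 0 < Real.sqrt 3 := Real.sqrt_pos.2 (by norm_num)
  have h5lt : Real.sqrt 5 ≤ 9/4 := by nlinarith
  have h3gt : (3:ℝ)/2 ≤ Real.sqrt 3 := by nlinarith
  have hpi : 0 < π := Real.pi_pos
  have h1 : π/6 ≤ Real.arccos (Real.sqrt 5 / 3) := by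
    have hx : Real.sqrt 5 / 3 ≤ Real.sqrt 3 / 2 := by linarith
    have h := arccos_anti hx
    rw [← Real.cos_pi_div_six, Real.arccos_cos (by positivity) (by linarith)] at h
    linarith
  have h2 : π/2 ≤ Real.arccos ((3 - 5 * Real.sqrt 5 / 3) / (5 - Real.sqrt 5)) := by
    have hden : 0 < 5 - Real.sqrt 5 := by nlinarith
    have hx : (3 - 5 * Real.sqrt 5 / 3) / (5 - Real.sqrt 5) ≤ 0 := by
      apply div_nonpos_of_nonpos_of_nonneg _ hden.le
      nlinarith
    have h := arccos_anti hx
    rw [Real.arccos_zero] at h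
    linarith
  linarith
end

section
/- ∫_{π/3}^{5π/6} sin(θ) · arccos(−(1/√3)·cot θ) dθ = π/4 + (1/2)·arcsin(1/3) + (1/2)·arccos(−1/3). -/
/-! For `a > 0`, wherever `sin θ > 0` and `|a cot θ| < 1`,
`F a θ = -cos θ * arccos (-a cot θ) - arctan (√(1 - (1 + a²) cos² θ) / a)`
is a primitive of `sin θ * arccos (-a cot θ)`: differentiating `arccos` produces the term
`a cos θ / (sin θ √(1 - (1 + a²) cos² θ))`, which the `arctan` term cancels.
For `a = 1/√3` the primitive vanishes at `5π/6` and equals `-(1/2) arccos (-1/3) - arctan √2` at `π/3`;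
since `cos (2 arctan √2) = -1/3`, the integral is `arccos (-1/3)`. -/

open Real intervalIntegral Set

namespace Real

theorem hasDerivAt_cot {x : ℝ} (h : sin x ≠ 0) : HasDerivAt cot (-1 / sin x ^ 2) x := by
  have hcot : cot = fun t => cos t / sin t := funext cot_eq_cos_div_sin
  rw [hcot]
  refine ((hasDerivAt_cos x).div (hasDerivAt_sin x) h).congr_deriv ?_
  rw [← sin_sq_add_cos_sq x]
  ring

theorem continuousOn_cot : ContinuousOn cot {x | sin x ≠ 0} :=
  fun _ hx => (hasDerivAt_cot hx).continuousAt.continuousWithinAt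

theorem one_sub_sq_mul_cot (a : ℝ) {θ : ℝ} (h : sin θ ≠ 0) :
    1 - (a * cot θ) ^ 2 = (1 - (1 + a ^ 2) * cos θ ^ 2) / sin θ ^ 2 := by
  rw [cot_eq_cos_div_sin]
  field_simp
  linear_combination sin_sq_add_cos_sq θ

theorem cos_five_pi_div_six : cos (5 * π / 6) = -(√3 / 2) := by
  rw [show 5 * π / 6 = π - π / 6 by ring, cos_pi_sub, cos_pi_div_six]

theorem sin_five_pi_div_six : sin (5 * π / 6) = 1 / 2 := by
  rw [show 5 * π / 6 = π - π / 6 by ring, sin_pi_sub, sin_pi_div_six]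

theorem cos_sq_lt_three_div_four_of_mem_Ioo {θ : ℝ} (hθ : θ ∈ Ioo (π / 6) (5 * π / 6)) :
    cos θ ^ 2 < 3 / 4 := by
  have hlt : cos θ < √3 / 2 := by
    rw [← cos_pi_div_six]
    exact cos_lt_cos_of_nonneg_of_le_pi (by positivity) (by linarith [hθ.2, pi_pos]) hθ.1
  have hgt : -(√3 / 2) < cos θ := by
    rw [← cos_five_pi_div_six]
    exact cos_lt_cos_of_nonneg_of_le_pi (by linarith [hθ.1, pi_pos]) (by linarith [pi_pos]) hθ.2
  calc cos θ ^ 2 < (√3 / 2) ^ 2 := sq_lt_sq' hgt hlt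
    _ = 3 / 4 := by rw [div_pow, sq_sqrt zero_le_three]; norm_num

theorem two_mul_arctan_sqrt_two : 2 * arctan √2 = arccos (-(1 / 3)) := by
  have hcos : cos (2 * arctan √2) = -(1 / 3) := by
    rw [cos_two_mul, cos_arctan, div_pow, sq_sqrt (by positivity), sq_sqrt zero_le_two]
    norm_num
  rw [← hcos, arccos_cos]
  · exact mul_nonneg zero_le_two (arctan_nonneg.2 (sqrt_nonneg 2))
  · linarith [arctan_lt_pi_div_two √2]

end Real

noncomputable def sinMulArccosCotPrimitive (a θ : ℝ) : ℝ :=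
  -cos θ * arccos (-a * cot θ) - arctan (√(1 - (1 + a ^ 2) * cos θ ^ 2) / a)

theorem hasDerivAt_sinMulArccosCotPrimitive {a θ : ℝ} (ha : 0 < a) (hsin : 0 < sin θ)
    (hD : 0 < 1 - (1 + a ^ 2) * cos θ ^ 2) :
    HasDerivAt (sinMulArccosCotPrimitive a) (sin θ * arccos (-a * cot θ)) θ := by
  have hsq : 1 - (-a * cot θ) ^ 2 = (1 - (1 + a ^ 2) * cos θ ^ 2) / sin θ ^ 2 := by
    rw [one_sub_sq_mul_cot _ hsin.ne', neg_sq]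
  have habs : |-a * cot θ| < 1 := by
    rw [← sq_lt_one_iff_abs_lt_one, ← sub_pos, hsq]
    exact div_pos hD (by positivity)
  have hcot := (hasDerivAt_cot hsin.ne').const_mul (-a)
  have harccos := (hasDerivAt_arccos (abs_lt.1 habs).1.ne' (abs_lt.1 habs).2.ne).comp θ hcot
  have hD' : HasDerivAt (fun t => 1 - (1 + a ^ 2) * cos t ^ 2)
      (-((1 + a ^ 2) * (2 * cos θ ^ 1 * -sin θ))) θ :=
    (((hasDerivAt_cos θ).pow 2).const_mul _).const_sub 1
  have harctan := (((hasDerivAt_sqrt hD.ne').comp θ hD').div_const a).arctan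
  refine (((hasDerivAt_cos θ).neg.mul harccos).sub harctan).congr_deriv ?_
  have h1 : 1 + (√(1 - (1 + a ^ 2) * cos θ ^ 2) / a) ^ 2 = (1 + a ^ 2) * sin θ ^ 2 / a ^ 2 := by
    rw [div_pow, sq_sqrt hD.le, sin_sq]
    field_simp
    ring
  rw [hsq, sqrt_div' _ (by positivity), sqrt_sq hsin.le]
  simp only [Function.comp, h1, Pi.neg_apply]
  have hsD := sqrt_pos.2 hD
  field_simp
  ring

theorem integral_sin_mul_arccos_neg_mul_cot {a b c : ℝ} (ha : 0 < a) (hbc : b ≤ c)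
    (hsin : ∀ θ ∈ Icc b c, 0 < sin θ) (hD : ∀ θ ∈ Ioo b c, 0 < 1 - (1 + a ^ 2) * cos θ ^ 2) :
    ∫ θ in b..c, sin θ * arccos (-a * cot θ)
      = sinMulArccosCotPrimitive a c - sinMulArccosCotPrimitive a b := by
  have hcot : ContinuousOn cot (Icc b c) :=
    continuousOn_cot.mono fun θ hθ => (hsin θ hθ).ne'
  have harccos : ContinuousOn (fun θ => arccos (-a * cot θ)) (Icc b c) :=
    continuous_arccos.comp_continuousOn (hcot.const_smul (-a))
  refine integral_eq_sub_of_hasDerivAt_of_le hbc ?_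
    (fun θ hθ => hasDerivAt_sinMulArccosCotPrimitive ha (hsin θ (Ioo_subset_Icc_self hθ)) (hD θ hθ))
    ?_
  · unfold sinMulArccosCotPrimitive
    fun_prop
  · exact (continuous_sin.continuousOn.mul harccos).intervalIntegrable_of_Icc hbc

theorem sinMulArccosCotPrimitive_five_pi_div_six :
    sinMulArccosCotPrimitive (1 / √3) (5 * π / 6) = 0 := by
  have h3 : √3 ^ 2 = 3 := sq_sqrt zero_le_three
  have hg : -(1 / √3) * cot (5 * π / 6) = 1 := by
    rw [cot_eq_cos_div_sin, cos_five_pi_div_six, sin_five_pi_div_six]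
    field_simp
  have hD : 1 - (1 + (1 / √3) ^ 2) * cos (5 * π / 6) ^ 2 = 0 := by
    rw [cos_five_pi_div_six, div_pow, neg_sq, div_pow, h3]
    norm_num
  rw [sinMulArccosCotPrimitive, hg, hD, arccos_one, sqrt_zero, zero_div, arctan_zero]
  ring

theorem sinMulArccosCotPrimitive_pi_div_three :
    sinMulArccosCotPrimitive (1 / √3) (π / 3) = -(1 / 2) * arccos (-(1 / 3)) - arctan √2 := by
  have h3 : √3 ^ 2 = 3 := sq_sqrt zero_le_three
  have hg : -(1 / √3) * cot (π / 3) = -(1 / 3) := by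
    rw [cot_eq_cos_div_sin, cos_pi_div_three, sin_pi_div_three]
    field_simp
    linarith
  have hD : √(1 - (1 + (1 / √3) ^ 2) * cos (π / 3) ^ 2) / (1 / √3) = √2 := by
    rw [cos_pi_div_three, div_pow, h3, div_div_eq_mul_div, div_one, ← sqrt_mul (by norm_num)]
    norm_num
  rw [sinMulArccosCotPrimitive, hg, hD, cos_pi_div_three]

theorem triple_bubble_integral :
    ∫ θ in (π/3)..(5*π/6), Real.sin θ * Real.arccos (-(1 / Real.sqrt 3) * Real.cot θ)
      = π/4 + (1/2) * Real.arcsin (1/3) + (1/2) * Real.arccos (-(1/3)) := by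
  have hsin : ∀ θ ∈ Icc (π / 3) (5 * π / 6), 0 < sin θ := fun θ hθ =>
    sin_pos_of_pos_of_lt_pi (by linarith [hθ.1, pi_pos]) (by linarith [hθ.2, pi_pos])
  have hD : ∀ θ ∈ Ioo (π / 3) (5 * π / 6), 0 < 1 - (1 + (1 / √3) ^ 2) * cos θ ^ 2 := by
    intro θ hθ
    have := cos_sq_lt_three_div_four_of_mem_Ioo ⟨by linarith [hθ.1, pi_pos], hθ.2⟩
    rw [div_pow, sq_sqrt zero_le_three]
    linarith
  have harccos : arccos (-(1 / 3)) = π / 2 + arcsin (1 / 3) := by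
    rw [arccos_eq_pi_div_two_sub_arcsin, arcsin_neg, sub_neg_eq_add]
  rw [integral_sin_mul_arccos_neg_mul_cot (by positivity) (by linarith [pi_pos]) hsin hD,
    sinMulArccosCotPrimitive_five_pi_div_six, sinMulArccosCotPrimitive_pi_div_three]
  linarith [two_mul_arctan_sqrt_two]
end

section
/- ∫_{−1/3}^{1} √3 · arccos(y) / (1 + 3y²)^{3/2} dy = π/4 + (1/2)·arcsin(1/3) + (1/2)·arccos(−1/3). -/
/-!
Integrate by parts: `y / √(1 + 3y²)` is a primitive of `(1 + 3y²)^(-3/2)`, and the remaining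
integrand `√3 y / (√(1 + 3y²) √(1 - y²))` is the derivative of `-½ arcsin ((1 - 3y²) / 2)`, since
`1 - ((1 - 3y²) / 2)² = ¾ (1 + 3y²)(1 - y²)`. The resulting primitive is continuous on `[-1/3, 1]`
and takes the values `π/4` at `1` and `-½ arccos (-1/3) - ½ arcsin (1/3)` at `-1/3`.
-/

open Real intervalIntegral Set MeasureTheory

lemma rpow_three_halves_eq_mul_sqrt {x : ℝ} (hx : 0 ≤ x) : x ^ (3 / 2 : ℝ) = x * √x := by
  rw [show (3 / 2 : ℝ) = 1 + 1 / 2 by norm_num, rpow_add' hx (by norm_num), rpow_one, sqrt_eq_rpow]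

lemma hasDerivAt_div_sqrt_one_add_mul_sq {c : ℝ} (hc : 0 ≤ c) (y : ℝ) :
    HasDerivAt (fun y => y / √(1 + c * y ^ 2)) (1 / (1 + c * y ^ 2) ^ (3 / 2 : ℝ)) y := by
  have hpos : 0 < 1 + c * y ^ 2 := by positivity
  have hsqrt : HasDerivAt (fun y => √(1 + c * y ^ 2)) (2 * c * y / (2 * √(1 + c * y ^ 2))) y := by
    convert (((hasDerivAt_pow 2 y).const_mul c).const_add 1).sqrt hpos.ne' using 2
    ring
  refine ((hasDerivAt_id' y).div hsqrt (sqrt_pos.2 hpos).ne').congr_deriv ?_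
  rw [rpow_three_halves_eq_mul_sqrt hpos.le]
  field_simp
  rw [sq_sqrt hpos.le]
  ring

lemma sqrt_one_sub_sq_one_sub_three_mul_sq_div_two (y : ℝ) :
    √(1 - ((1 - 3 * y ^ 2) / 2) ^ 2) = √3 * √(1 + 3 * y ^ 2) * √(1 - y ^ 2) / 2 := by
  rw [show 1 - ((1 - 3 * y ^ 2) / 2) ^ 2 = 3 * (1 + 3 * y ^ 2) * (1 - y ^ 2) / 2 ^ 2 by ring,
    sqrt_div' _ (by positivity), sqrt_sq zero_le_two, sqrt_mul (by positivity), sqrt_mul zero_le_three]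

lemma hasDerivAt_arcsin_one_sub_three_mul_sq_div_two {y : ℝ} (hy : y ∈ Ioo (-1) 1) :
    HasDerivAt (fun y => arcsin ((1 - 3 * y ^ 2) / 2))
      (-(2 * √3 * y / (√(1 + 3 * y ^ 2) * √(1 - y ^ 2)))) y := by
  obtain ⟨hy₁, hy₂⟩ := hy
  have hu : HasDerivAt (fun y => (1 - 3 * y ^ 2) / 2) (-(3 * y)) y :=
    ((((hasDerivAt_pow 2 y).const_mul 3).const_sub 1).div_const 2).congr_deriv (by ring)
  refine ((hasDerivAt_arcsin (by nlinarith) (by nlinarith)).comp y hu).congr_deriv ?_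
  rw [sqrt_one_sub_sq_one_sub_three_mul_sq_div_two]
  have h3 : 0 < √3 := by positivity
  have h1 : 0 < √(1 + 3 * y ^ 2) := sqrt_pos.2 (by positivity)
  have h2 : 0 < √(1 - y ^ 2) := sqrt_pos.2 (by nlinarith)
  field_simp
  rw [sq_sqrt zero_le_three]

noncomputable def tripleBubblePrimitive (y : ℝ) : ℝ :=
  √3 * (arccos y * (y / √(1 + 3 * y ^ 2))) - arcsin ((1 - 3 * y ^ 2) / 2) / 2

lemma hasDerivAt_tripleBubblePrimitive {y : ℝ} (hy : y ∈ Ioo (-1) 1) :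
    HasDerivAt tripleBubblePrimitive (√3 * arccos y / (1 + 3 * y ^ 2) ^ (3 / 2 : ℝ)) y := by
  have h := (((hasDerivAt_arccos hy.1.ne' hy.2.ne).mul
    (hasDerivAt_div_sqrt_one_add_mul_sq zero_le_three y)).const_mul √3).sub
    ((hasDerivAt_arcsin_one_sub_three_mul_sq_div_two hy).div_const 2)
  refine h.congr_deriv ?_
  field_simp
  ring

lemma continuous_tripleBubblePrimitive : Continuous tripleBubblePrimitive := by
  unfold tripleBubblePrimitive
  fun_prop (disch := exact fun y => (sqrt_pos.2 (by positivity)).ne')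

lemma tripleBubblePrimitive_one : tripleBubblePrimitive 1 = π / 4 := by
  norm_num [tripleBubblePrimitive, arcsin_neg_one]
  ring

lemma tripleBubblePrimitive_neg_one_third :
    tripleBubblePrimitive (-1 / 3) = -(arccos (-(1 / 3)) / 2) - arcsin (1 / 3) / 2 := by
  have hcoeff : √3 * (-1 / 3 / √(1 + 3 * (-1 / 3) ^ 2)) = -1 / 2 := by
    rw [show (1 : ℝ) + 3 * (-1 / 3) ^ 2 = 2 ^ 2 / 3 by norm_num, sqrt_div' _ zero_le_three,
      sqrt_sq zero_le_two]
    field_simp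
    rw [sq_sqrt zero_le_three]
  simp only [tripleBubblePrimitive]
  rw [mul_left_comm, hcoeff]
  norm_num
  ring

theorem triple_bubble_integral_substituted :
    ∫ y in (-(1:ℝ)/3)..1, Real.sqrt 3 * Real.arccos y / (1 + 3 * y^2) ^ ((3:ℝ)/2)
      = π/4 + (1/2) * Real.arcsin (1/3) + (1/2) * Real.arccos (-(1/3)) := by
  have hderiv : ∀ y ∈ Ioo (-(1 : ℝ) / 3) 1,
      HasDerivAt tripleBubblePrimitive (√3 * arccos y / (1 + 3 * y ^ 2) ^ (3 / 2 : ℝ)) y :=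
    fun y hy => hasDerivAt_tripleBubblePrimitive ⟨by linarith [hy.1], hy.2⟩
  have hint : IntervalIntegrable (fun y => √3 * arccos y / (1 + 3 * y ^ 2) ^ (3 / 2 : ℝ))
      volume (-1 / 3) 1 := by
    refine Continuous.intervalIntegrable ?_ _ _
    refine Continuous.div (by fun_prop) ?_ fun y => by positivity
    exact Continuous.rpow_const (by fun_prop) fun _ => Or.inr (by norm_num)
  rw [integral_eq_sub_of_hasDerivAt_of_le (by norm_num)
    continuous_tripleBubblePrimitive.continuousOn hderiv hint,
    tripleBubblePrimitive_one, tripleBubblePrimitive_neg_one_third]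
  ring
end

section
/- ∫₀^π (1 − 2a·cos t + a² + c²)^{−1} dt = π / (√((1+a)²+c²)·√((1−a)²+c²)) for all real a, c with c ≠ 0 or |a| ≠ 1. -/
/-! For `|B| < A` and `s = √(A² - B²)`, the function `(t + 2 arctan (B sin t / (A + s - B cos t))) / s`
is an antiderivative of `(A - B cos t)⁻¹` on all of `ℝ`: it is the Weierstrass-substitution primitive
`(2 / s) arctan (√((A + B) / (A - B)) tan (t / 2))` with its jumps at odd multiples of `π` removed.
It vanishes at `0` and equals `π / s` at `π`. The theorem is the case `A = 1 + a² + c²`, `B = 2a`, where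
`A² - B² = ((1 + a)² + c²) ((1 - a)² + c²)` and `A - |B| = (1 - |a|)² + c²`. -/

open Real intervalIntegral

lemma sub_mul_cos_pos {A B : ℝ} (hAB : |B| < A) (t : ℝ) : 0 < A - B * cos t := by
  have : B * cos t ≤ |B| :=
    calc B * cos t ≤ |B * cos t| := le_abs_self _
      _ = |B| * |cos t| := abs_mul _ _
      _ ≤ |B| := mul_le_of_le_one_right (abs_nonneg B) (abs_cos_le_one t)
  linarith

lemma hasDerivAt_add_two_arctan_div {A B s t : ℝ} (hs : s ^ 2 = A ^ 2 - B ^ 2) (hs0 : s ≠ 0)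
    (hD : A + s - B * cos t ≠ 0) (hden : A - B * cos t ≠ 0) :
    HasDerivAt (fun t => (t + 2 * arctan (B * sin t / (A + s - B * cos t))) / s)
      (A - B * cos t)⁻¹ t := by
  have hquot : HasDerivAt (fun t => B * sin t / (A + s - B * cos t))
      ((B * cos t * (A + s - B * cos t) - B * sin t * (B * sin t)) / (A + s - B * cos t) ^ 2) t := by
    have hD' : HasDerivAt (fun t => A + s - B * cos t) (B * sin t) t := by
      simpa using ((hasDerivAt_cos t).const_mul B).const_sub (A + s)
    exact ((hasDerivAt_sin t).const_mul B).div hD' hD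
  refine (((hasDerivAt_id t).add (hquot.arctan.const_mul 2)).div_const s).congr_deriv ?_
  have h1u : 1 + (B * sin t / (A + s - B * cos t)) ^ 2 ≠ 0 := by positivity
  field_simp
  linear_combination
    (-(A + s - B * cos t)) * hs - ((A + s - B * cos t) * B ^ 2) * sin_sq_add_cos_sq t

theorem integral_inv_sub_mul_cos {A B : ℝ} (hAB : |B| < A) :
    ∫ t in (0 : ℝ)..π, (A - B * cos t)⁻¹ = π / √(A ^ 2 - B ^ 2) := by
  have hsq : 0 < A ^ 2 - B ^ 2 := by nlinarith [sq_abs B, abs_nonneg B]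
  have hs0 : 0 < √(A ^ 2 - B ^ 2) := sqrt_pos.mpr hsq
  have hpos := sub_mul_cos_pos hAB
  have hderiv (t : ℝ) (_ : t ∈ Set.uIcc 0 π) := hasDerivAt_add_two_arctan_div
    (sq_sqrt hsq.le) hs0.ne' (by linarith [hpos t]) (hpos t).ne'
  have hcont : ContinuousOn (fun t => (A - B * cos t)⁻¹) (Set.uIcc 0 π) :=
    (continuous_const.sub (continuous_const.mul continuous_cos)).continuousOn.inv₀
      fun t _ => (hpos t).ne'
  rw [integral_eq_sub_of_hasDerivAt hderiv hcont.intervalIntegrable]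
  simp

theorem circle_distance_integral (a c : ℝ) (h : c ≠ 0 ∨ |a| ≠ 1) :
    ∫ t in (0:ℝ)..π, (1 - 2 * a * Real.cos t + a^2 + c^2)⁻¹
      = π / (Real.sqrt ((1+a)^2 + c^2) * Real.sqrt ((1-a)^2 + c^2)) := by
  have hAB : |2 * a| < 1 + a ^ 2 + c ^ 2 := by
    have : 0 < (1 - |a|) ^ 2 + c ^ 2 := by
      rcases h with hc | ha
      · positivity
      · have : 1 - |a| ≠ 0 := fun h0 => ha (by linarith)
        positivity
    rw [abs_mul, abs_two]
    nlinarith [sq_abs a]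
  calc ∫ t in (0:ℝ)..π, (1 - 2 * a * cos t + a ^ 2 + c ^ 2)⁻¹
      = ∫ t in (0:ℝ)..π, (1 + a ^ 2 + c ^ 2 - 2 * a * cos t)⁻¹ := by ring_nf
    _ = π / √((1 + a ^ 2 + c ^ 2) ^ 2 - (2 * a) ^ 2) := integral_inv_sub_mul_cos hAB
    _ = π / (√((1 + a) ^ 2 + c ^ 2) * √((1 - a) ^ 2 + c ^ 2)) := by
      rw [← sqrt_mul (by positivity)]
      ring_nf
end

section
/- The map f : (0,∞) × [0,2π) → ℝ³, f(ρ,θ) = (ρ cos 2θ, ρ sin 2θ, δ e^{−1/ρ²} ψ(ρ) cos θ), satisfies |∂_ρ f × ∂_θ f|² ≥ 4ρ² for all ρ > 0, where ψ is any smooth function with |ψ| ≤ 1 and δ ≥ 0 sufficiently small; in particular f is an immersion away from ρ = 0. -/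
open Real

theorem branched_immersion_cross_product (ψ : ℝ → ℝ) (hψ : ContDiff ℝ (⊤ : ℕ∞) ψ)
    (hψ1 : ∀ ρ, |ψ ρ| ≤ 1) :
    ∃ δ₀ : ℝ, 0 < δ₀ ∧ ∀ δ : ℝ, 0 ≤ δ → δ ≤ δ₀ → ∀ ρ : ℝ, 0 < ρ → ∀ θ : ℝ,
      (∑ i : Fin 3,
        (crossProduct
          (deriv (fun r : ℝ =>
            ![r * Real.cos (2*θ), r * Real.sin (2*θ),
              δ * Real.exp (-1 / r^2) * ψ r * Real.cos θ]) ρ)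
          (deriv (fun t : ℝ =>
            ![ρ * Real.cos (2*t), ρ * Real.sin (2*t),
              δ * Real.exp (-1 / ρ^2) * ψ ρ * Real.cos t]) θ) i) ^ 2)
        ≥ 4 * ρ ^ 2 := by
  refine ⟨1, one_pos, fun δ hδ0 hδ1 ρ hρ θ => ?_⟩
  -- derivative of the third ρ-component
  have hsq : ρ ^ 2 ≠ 0 := by positivity
  have hg : DifferentiableAt ℝ (fun r : ℝ => δ * Real.exp (-1 / r ^ 2) * ψ r) ρ := by
    refine DifferentiableAt.mul (DifferentiableAt.mul (differentiableAt_const _) ?_)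
      (hψ.differentiable (by simp)).differentiableAt
    exact Real.differentiable_exp.differentiableAt.comp ρ
      ((differentiableAt_const (-1 : ℝ)).div (differentiableAt_pow 2) hsq)
  set c : ℝ := deriv (fun r : ℝ => δ * Real.exp (-1 / r ^ 2) * ψ r) ρ with hc
  set C : ℝ := δ * Real.exp (-1 / ρ ^ 2) * ψ ρ with hC
  have hu : HasDerivAt (fun r : ℝ =>
      ![r * Real.cos (2*θ), r * Real.sin (2*θ),
        δ * Real.exp (-1 / r^2) * ψ r * Real.cos θ])
      ![Real.cos (2*θ), Real.sin (2*θ), c * Real.cos θ] ρ := by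
    rw [hasDerivAt_pi]
    intro i
    fin_cases i
    · simpa using (hasDerivAt_id ρ).mul_const (Real.cos (2*θ))
    · simpa using (hasDerivAt_id ρ).mul_const (Real.sin (2*θ))
    · simpa using hg.hasDerivAt.mul_const (Real.cos θ)
  have hv : HasDerivAt (fun t : ℝ =>
      ![ρ * Real.cos (2*t), ρ * Real.sin (2*t),
        δ * Real.exp (-1 / ρ^2) * ψ ρ * Real.cos t])
      ![ρ * (-Real.sin (2*θ) * 2), ρ * (Real.cos (2*θ) * 2), C * (-Real.sin θ)] θ := by
    rw [hasDerivAt_pi]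
    intro i
    have h2 : HasDerivAt (fun t : ℝ => 2 * t) 2 θ := by
      simpa using (hasDerivAt_id θ).const_mul (2:ℝ)
    fin_cases i
    · simpa using (((Real.hasDerivAt_cos (2*θ)).comp θ h2).const_mul ρ)
    · simpa using (((Real.hasDerivAt_sin (2*θ)).comp θ h2).const_mul ρ)
    · simpa using ((Real.hasDerivAt_cos θ).const_mul C)
  rw [hu.deriv, hv.deriv]
  have hpyth := Real.sin_sq_add_cos_sq (2*θ)
  simp only [Fin.sum_univ_three, crossProduct, LinearMap.mk₂_apply,
    Matrix.cons_val_zero, Matrix.cons_val_one, Matrix.head_cons,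
    Matrix.cons_val_two, Matrix.tail_cons]
  have h3 : Real.cos (2*θ) * (ρ * (Real.cos (2*θ) * 2)) - Real.sin (2*θ) * (ρ * (-Real.sin (2*θ) * 2)) = 2 * ρ := by
    linear_combination 2 * ρ * hpyth
  rw [h3]
  nlinarith [sq_nonneg (Real.sin (2*θ) * (C * (-Real.sin θ)) - c * Real.cos θ * (ρ * (Real.cos (2*θ) * 2))), sq_nonneg (c * Real.cos θ * (ρ * (-Real.sin (2*θ) * 2)) - Real.cos (2*θ) * (C * (-Real.sin θ)))]
end

section
/- 8·(2·arcsin(1/√3)) + 8·(2·arcsin(√(2−√2)/√3)) + 8·(2·arcsin(√((∜2 − 1)²/6 + (2−√2)²/12))) > 4π. -/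
open Real

lemma my_self_le_arcsin {x : ℝ} (h0 : 0 ≤ x) (h1 : x ≤ 1) : x ≤ Real.arcsin x := by
  rcases eq_or_lt_of_le h1 with rfl | h1'
  · rw [Real.arcsin_one]; linarith [Real.pi_gt_three]
  · exact (Real.le_arcsin_iff_sin_le' ⟨by linarith [Real.pi_gt_three],
      by linarith [Real.pi_gt_three]⟩).2 (Real.sin_le h0)

theorem quad_pentagon_net_length_gt :
    8 * (2 * Real.arcsin (1 / Real.sqrt 3))
      + 8 * (2 * Real.arcsin (Real.sqrt (2 - Real.sqrt 2) / Real.sqrt 3))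
      + 8 * (2 * Real.arcsin (Real.sqrt
          (((2:ℝ) ^ ((1:ℝ)/4) - 1) ^ 2 / 6 + (2 - Real.sqrt 2) ^ 2 / 12)))
      > 4 * π := by
  have h2 : Real.sqrt 2 < 1.4143 := (Real.sqrt_lt' (by norm_num)).2 (by norm_num)
  have h3 : Real.sqrt 3 < 1.7321 := (Real.sqrt_lt' (by norm_num)).2 (by norm_num)
  have h3' : (1.7 : ℝ) < Real.sqrt 3 := (Real.lt_sqrt (by norm_num)).2 (by norm_num)
  have hs : (0.765 : ℝ) < Real.sqrt (2 - Real.sqrt 2) :=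
    (Real.lt_sqrt (by norm_num)).2 (by nlinarith)
  -- bounds for arguments
  have ha1 : (0.577 : ℝ) < 1 / Real.sqrt 3 := by
    rw [lt_div_iff₀ (by linarith)]; nlinarith
  have ha1' : 1 / Real.sqrt 3 ≤ 1 := by
    rw [div_le_one (by linarith)]; linarith
  have ha2 : (0.441 : ℝ) < Real.sqrt (2 - Real.sqrt 2) / Real.sqrt 3 := by
    rw [lt_div_iff₀ (by linarith)]; nlinarith
  have ha2' : Real.sqrt (2 - Real.sqrt 2) / Real.sqrt 3 ≤ 1 := by
    rw [div_le_one (by linarith)]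
    have : Real.sqrt (2 - Real.sqrt 2) < 1.7 := by
      apply (Real.sqrt_lt' (by norm_num)).2
      nlinarith [Real.sqrt_nonneg 2]
    linarith
  have hA1 := my_self_le_arcsin (by linarith : (0:ℝ) ≤ 1 / Real.sqrt 3) ha1'
  have hA2 := my_self_le_arcsin (by linarith : (0:ℝ) ≤ Real.sqrt (2 - Real.sqrt 2) / Real.sqrt 3) ha2'
  have hA3 : 0 ≤ Real.arcsin (Real.sqrt
      (((2:ℝ) ^ ((1:ℝ)/4) - 1) ^ 2 / 6 + (2 - Real.sqrt 2) ^ 2 / 12)) :=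
    Real.arcsin_nonneg.2 (Real.sqrt_nonneg _)
  have hpi : π < 3.15 := by
    have := Real.pi_lt_d2
    linarith
  linarith
end
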